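/- arXiv:1512.06662 — 2 statements merged into one kernel-verified Lean document; each statement's English description precedes it below -/
import Mathlib

section
/- Let V be a finite-dimensional real inner product space with orthonormal basis {e_j}, dual basis {ε^j}, and form the real Clifford algebra Cl(V × V*) of the direct sum with the sum of the inner product on V and the dual inner product on V*. Then for every symmetric polynomial p in n = dim V variables, the element p(e_1ε^1, ..., e_nε^n) of Cl(V × V*) is invariant under the diagonal action of the orthogonal group O(V) (acting on V* via the dual action). -/
/-!
The elements `xⱼ = eⱼεʲ` pairwise commute and square to `-1`, because `eⱼ` and `εʲ` are unit
vectors orthogonal to all other generators. Hence each power sum `∑ⱼ xⱼᵏ` is `n (-1)ᵐ` or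
`(-1)ᵐ c` with `c = ∑ⱼ xⱼ`, and since in characteristic zero the power sums generate the
symmetric polynomials (Newton's identities), `p(x)` lies in the subalgebra generated by `c`.
For orthogonal `g` the dual action on `V*` is `g` again, so `g` sends `c` to
`∑ⱼ e(g eⱼ) ε(g eⱼ) = ∑ᵢₖ (g gᵀ)ᵢₖ eᵢ εᵏ = c`, and therefore fixes `p(x)`.
-/

open Matrix

noncomputable section

variable (n : ℕ)

/-- The quadratic form on `V × V* ≅ ℝⁿ × ℝⁿ` (the sum of the standard inner
product on `V` and the dual inner product on `V*`, written in orthonormal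
coordinates for `V` and the dual coordinates for `V*`). -/
def Qform : QuadraticForm ℝ ((Fin n → ℝ) × (Fin n → ℝ)) :=
  (QuadraticMap.weightedSumSquares ℝ (fun _ : Fin n => (1 : ℝ))).prod
    (QuadraticMap.weightedSumSquares ℝ (fun _ : Fin n => (1 : ℝ)))

/-- The generator `e_j ∈ V ⊂ Cl(V × V*)`. -/
def Egen (j : Fin n) : CliffordAlgebra (Qform n) :=
  CliffordAlgebra.ι (Qform n) (Pi.single j 1, 0)

/-- The generator `ε^j ∈ V* ⊂ Cl(V × V*)`. -/
def EpsGen (j : Fin n) : CliffordAlgebra (Qform n) :=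
  CliffordAlgebra.ι (Qform n) (0, Pi.single j 1)

/-- Evaluation of a polynomial `p` at the (pairwise commuting) elements
`x_j = e_jε^j` of `Cl(V × V*)`; the product is taken in the order
`j = 0, 1, …, n−1` (for symmetric `p` the order is immaterial since the `x_j`
commute). -/
def evalAtEEps (p : MvPolynomial (Fin n) ℝ) : CliffordAlgebra (Qform n) :=
  Finsupp.sum (AddMonoidAlgebra.coeff p) fun m c =>
    c • (List.ofFn fun j : Fin n => (Egen n j * EpsGen n j) ^ m j).prod

theorem Algebra.isMulCommutative_adjoin_range {σ K B : Type*} [CommSemiring K] [Semiring B]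
    [Algebra K B] {x : σ → B} (hx : ∀ i j, Commute (x i) (x j)) :
    IsMulCommutative (Algebra.adjoin K (Set.range x)) :=
  Algebra.isMulCommutative_adjoin K <| by rintro _ ⟨i, rfl⟩ _ ⟨j, rfl⟩; exact hx i j

namespace MvPolynomial

section Symmetric

variable {σ K : Type*} [Fintype σ] [Field K] [CharZero K]

theorem esymm_mem_adjoin_range_psum (k : ℕ) :
    esymm σ K k ∈ Algebra.adjoin K (Set.range (psum σ K)) := by
  induction k using Nat.strong_induction_on with
  | _ k ih =>
    rcases Nat.eq_zero_or_pos k with rfl | hk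
    · simpa only [esymm_zero] using Subalgebra.one_mem _
    have hsign (i : ℕ) : (-1 : MvPolynomial σ K) ^ i ∈ Algebra.adjoin K (Set.range (psum σ K)) :=
      Subalgebra.pow_mem _ (Subalgebra.neg_mem _ (Subalgebra.one_mem _)) _
    -- Newton's identities
    have hmul : (k : MvPolynomial σ K) * esymm σ K k ∈
        Algebra.adjoin K (Set.range (psum σ K)) := by
      rw [mul_esymm_eq_sum]
      refine Subalgebra.mul_mem _ (hsign _) (Subalgebra.sum_mem _ fun a ha => ?_)
      exact Subalgebra.mul_mem _ (Subalgebra.mul_mem _ (hsign _) (ih _ (Finset.mem_filter.mp ha).2))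
        (Algebra.subset_adjoin ⟨a.2, rfl⟩)
    have hk0 : (k : K) ≠ 0 := Nat.cast_ne_zero.mpr hk.ne'
    have := Subalgebra.smul_mem _ hmul (k : K)⁻¹
    rwa [← map_natCast (algebraMap K (MvPolynomial σ K)), ← Algebra.smul_def, smul_smul,
      inv_mul_cancel₀ hk0, one_smul] at this

theorem IsSymmetric.mem_adjoin_range_psum {p : MvPolynomial σ K} (hp : p.IsSymmetric) :
    p ∈ Algebra.adjoin K (Set.range (psum σ K)) := by
  obtain ⟨q, hq⟩ := esymmAlgHom_surjective K (le_refl (Fintype.card σ)) ⟨p, hp⟩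
  have hp_esymm :
      p ∈ Algebra.adjoin K (Set.range fun i : Fin (Fintype.card σ) => esymm σ K (i + 1)) := by
    rw [← aeval_range, show p = aeval _ q by rw [← esymmAlgHom_apply, hq]]
    exact AlgHom.mem_range_self _ q
  refine Algebra.adjoin_le ?_ hp_esymm
  rintro _ ⟨i, rfl⟩
  exact esymm_mem_adjoin_range_psum _

theorem IsSymmetric.map_mem_of_forall_map_psum_mem {B : Type*} [Semiring B] [Algebra K B]
    (φ : MvPolynomial σ K →ₐ[K] B) {S : Subalgebra K B} (hS : ∀ k, φ (psum σ K k) ∈ S)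
    {p : MvPolynomial σ K} (hp : p.IsSymmetric) : φ p ∈ S :=
  Algebra.adjoin_le (S := S.comap φ) (Set.range_subset_iff.2 hS) hp.mem_adjoin_range_psum

end Symmetric

section Commute

open scoped IsMulCommutative

variable {σ K B : Type*} [CommSemiring K] [Semiring B] [Algebra K B]

def aevalOfCommute (x : σ → B) (hx : ∀ i j, Commute (x i) (x j)) :
    MvPolynomial σ K →ₐ[K] B :=
  haveI := Algebra.isMulCommutative_adjoin_range (K := K) hx
  (Algebra.adjoin K (Set.range x)).val.comp
    (aeval fun i => ⟨x i, Algebra.subset_adjoin ⟨i, rfl⟩⟩)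

theorem aevalOfCommute_X (x : σ → B) (hx : ∀ i j, Commute (x i) (x j)) (i : σ) :
    aevalOfCommute x hx (X i : MvPolynomial σ K) = x i := by
  simp [aevalOfCommute]

theorem aevalOfCommute_eq_sum_coeff_smul_prod_ofFn {d : ℕ} (x : Fin d → B)
    (hx : ∀ i j, Commute (x i) (x j)) (p : MvPolynomial (Fin d) K) :
    aevalOfCommute x hx p = Finsupp.sum (AddMonoidAlgebra.coeff p) fun m c =>
      c • (List.ofFn fun j => x j ^ m j).prod := by
  have := Algebra.isMulCommutative_adjoin_range (K := K) hx
  rw [aevalOfCommute, AlgHom.comp_apply, aeval_def, eval₂, map_finsuppSum]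
  refine Finsupp.sum_congr fun e _ => ?_
  rw [map_mul, AlgHom.commutes, Algebra.smul_def, Finsupp.prod_fintype _ _ fun _ => pow_zero _,
    ← List.prod_ofFn, map_list_prod, List.map_ofFn]
  rfl

theorem aevalOfCommute_psum [Fintype σ] (x : σ → B) (hx : ∀ i j, Commute (x i) (x j)) (k : ℕ) :
    aevalOfCommute x hx (psum σ K k) = ∑ i, x i ^ k := by
  simp [psum, aevalOfCommute_X]

end Commute

end MvPolynomial

theorem Algebra.sum_pow_mem_adjoin_sum {σ K B : Type*} [Fintype σ] [CommSemiring K] [Semiring B]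
    [Algebra K B] {x : σ → B} {r : K} (hx : ∀ j, x j ^ 2 = algebraMap K B r) (k : ℕ) :
    ∑ j, x j ^ k ∈ Algebra.adjoin K {∑ j, x j} := by
  obtain ⟨m, rfl | rfl⟩ := Nat.even_or_odd' k
  · simp only [pow_mul, hx, ← map_pow, Finset.sum_const]
    exact Subalgebra.nsmul_mem _ (Subalgebra.algebraMap_mem _ _) _
  · simp only [pow_succ, pow_mul, hx, ← map_pow, ← Finset.mul_sum]
    exact Subalgebra.mul_mem _ (Subalgebra.algebraMap_mem _ _)
      (Algebra.self_mem_adjoin_singleton K _)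

theorem Matrix.sum_apply_col_col_of_mul_transpose_eq_one {ι R N : Type*} [Fintype ι]
    [DecidableEq ι] [CommSemiring R] [AddCommMonoid N] [Module R N]
    (β : (ι → R) →ₗ[R] (ι → R) →ₗ[R] N) {A : Matrix ι ι R} (hA : A * Aᵀ = 1) :
    ∑ j, β (A.col j) (A.col j) = ∑ j, β (Pi.single j 1) (Pi.single j 1) := by
  have hcol (j : ι) : A.col j = ∑ i, A i j • Pi.single i 1 := pi_eq_sum_univ' _
  calc ∑ j, β (A.col j) (A.col j)
      = ∑ j, ∑ k, ∑ i, (A k j * A i j) • β (Pi.single i 1) (Pi.single k 1) := by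
        simp only [hcol, map_sum, map_smul, LinearMap.sum_apply, LinearMap.smul_apply, smul_smul,
          Finset.smul_sum]
    _ = ∑ k, ∑ i, (A * Aᵀ) k i • β (Pi.single i 1) (Pi.single k 1) := by
        simp only [Matrix.mul_apply, Matrix.transpose_apply, Finset.sum_smul]
        rw [Finset.sum_comm]
        exact Finset.sum_congr rfl fun k _ => Finset.sum_comm
    _ = ∑ j, β (Pi.single j 1) (Pi.single j 1) := by
        simp [hA, Matrix.one_apply]

namespace CliffordAlgebra

variable {R M : Type*} [CommRing R] [AddCommGroup M] [Module R M] {Q : QuadraticForm R M}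

theorem commute_ι_mul_ι_of_isOrtho {a b c d : M} (hac : Q.IsOrtho a c) (had : Q.IsOrtho a d)
    (hbc : Q.IsOrtho b c) (hbd : Q.IsOrtho b d) :
    Commute (ι Q a * ι Q b) (ι Q c * ι Q d) :=
  calc ι Q a * ι Q b * (ι Q c * ι Q d)
      = ι Q a * (ι Q b * ι Q c) * ι Q d := by noncomm_ring
    _ = -(ι Q a * ι Q c * (ι Q b * ι Q d)) := by rw [ι_mul_ι_comm_of_isOrtho hbc]; noncomm_ring
    _ = -(ι Q c * (ι Q a * ι Q d) * ι Q b) := by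
        rw [ι_mul_ι_comm_of_isOrtho hac, ι_mul_ι_comm_of_isOrtho hbd]; noncomm_ring
    _ = ι Q c * ι Q d * (ι Q a * ι Q b) := by rw [ι_mul_ι_comm_of_isOrtho had]; noncomm_ring

theorem ι_mul_ι_sq_of_isOrtho {a b : M} (h : Q.IsOrtho a b) :
    (ι Q a * ι Q b) ^ 2 = -algebraMap R _ (Q a * Q b) :=
  calc (ι Q a * ι Q b) ^ 2
      = ι Q a * (ι Q b * ι Q a) * ι Q b := by noncomm_ring
    _ = -(ι Q a * ι Q a * (ι Q b * ι Q b)) := by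
        rw [ι_mul_ι_comm_of_isOrtho h.symm]; noncomm_ring
    _ = -algebraMap R _ (Q a * Q b) := by rw [ι_sq_scalar, ι_sq_scalar, map_mul]

end CliffordAlgebra

theorem QuadraticMap.isOrtho_weightedSumSquares_single {ι R : Type*} [Fintype ι] [DecidableEq ι]
    [CommSemiring R] (w : ι → R) {i j : ι} (hij : i ≠ j) (a b : R) :
    (weightedSumSquares R w).IsOrtho (Pi.single i a) (Pi.single j b) := by
  rw [isOrtho_def]
  simp only [weightedSumSquares_apply, Pi.add_apply, ← Finset.sum_add_distrib]
  refine Finset.sum_congr rfl fun k _ => ?_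
  rcases eq_or_ne k i with rfl | hki
  · simp [hij]
  · rcases eq_or_ne k j with rfl | hkj <;> simp [*]

section CliffordQform

open CliffordAlgebra

theorem Qform_apply_single_zero (j : Fin n) : Qform n (Pi.single j 1, 0) = 1 := by
  simp [Qform, Pi.single_apply]

theorem Qform_apply_zero_single (j : Fin n) : Qform n (0, Pi.single j 1) = 1 := by
  simp [Qform, Pi.single_apply]

theorem Egen_mul_EpsGen_commute (i j : Fin n) :
    Commute (Egen n i * EpsGen n i) (Egen n j * EpsGen n j) := by
  rcases eq_or_ne i j with rfl | hij
  · exact Commute.refl _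
  have hE := QuadraticMap.isOrtho_weightedSumSquares_single (fun _ : Fin n => (1 : ℝ)) hij 1 1
  exact commute_ι_mul_ι_of_isOrtho
    ((QuadraticMap.isOrtho_inl_inl_iff _ _).2 hE) (QuadraticMap.IsOrtho.inl_inr _ _)
    (QuadraticMap.IsOrtho.inr_inl _ _) ((QuadraticMap.isOrtho_inr_inr_iff _ _).2 hE)

theorem Egen_mul_EpsGen_sq (j : Fin n) :
    (Egen n j * EpsGen n j) ^ 2 = algebraMap ℝ _ (-1) := by
  rw [Egen, EpsGen, ι_mul_ι_sq_of_isOrtho (QuadraticMap.IsOrtho.inl_inr _ _),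
    Qform_apply_single_zero, Qform_apply_zero_single, mul_one, map_neg]

theorem map_sum_Egen_mul_EpsGen (f : Qform n →qᵢ Qform n) {A : Matrix (Fin n) (Fin n) ℝ}
    (hA : A * Aᵀ = 1) (hf : ∀ vφ : (Fin n → ℝ) × (Fin n → ℝ), f vφ = (A *ᵥ vφ.1, A *ᵥ vφ.2)) :
    map f (∑ j, Egen n j * EpsGen n j) = ∑ j, Egen n j * EpsGen n j := by
  let β := (LinearMap.mul ℝ (CliffordAlgebra (Qform n))).compl₁₂
    ((ι (Qform n)).comp (LinearMap.inl ℝ _ _)) ((ι (Qform n)).comp (LinearMap.inr ℝ _ _))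
  have := Matrix.sum_apply_col_col_of_mul_transpose_eq_one β hA
  simpa [β, Egen, EpsGen, hf, Matrix.mulVec_single_one] using this

end CliffordQform

/-- for every symmetric polynomial `p` in `n = dim V` variables,
the element `p(e_1ε^1, …, e_nε^n)` of `Cl(V × V*)` is invariant under the
diagonal action of the orthogonal group `O(V)`, where `g ∈ O(V)` acts on `V*`
by the dual (inverse-transpose) action. -/
theorem symmetric_polynomial_in_e_eps_invariant
    (p : MvPolynomial (Fin n) ℝ) (hp : p.IsSymmetric)
    (g : Matrix.orthogonalGroup (Fin n) ℝ)
    (f : Qform n →qᵢ Qform n)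
    (hf : ∀ vφ : (Fin n → ℝ) × (Fin n → ℝ),
      f vφ = (Matrix.mulVec (g : Matrix (Fin n) (Fin n) ℝ) vφ.1,
               Matrix.mulVec (((g⁻¹ : Matrix.orthogonalGroup (Fin n) ℝ) :
                  Matrix (Fin n) (Fin n) ℝ)ᵀ) vφ.2)) :
    CliffordAlgebra.map f (evalAtEEps n p) = evalAtEEps n p := by
  have hg : ((g⁻¹ : Matrix.orthogonalGroup (Fin n) ℝ) : Matrix (Fin n) (Fin n) ℝ)ᵀ = g := by
    simp [Matrix.star_eq_conjTranspose]
  have hc : CliffordAlgebra.map f (∑ j, Egen n j * EpsGen n j) = ∑ j, Egen n j * EpsGen n j :=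
    map_sum_Egen_mul_EpsGen n f ((Matrix.mem_orthogonalGroup_iff _ _).1 g.2) fun vφ => by
      rw [hf, hg]
  have hmem : evalAtEEps n p ∈ Algebra.adjoin ℝ {∑ j, Egen n j * EpsGen n j} := by
    rw [evalAtEEps, ← MvPolynomial.aevalOfCommute_eq_sum_coeff_smul_prod_ofFn _
      (Egen_mul_EpsGen_commute n)]
    refine hp.map_mem_of_forall_map_psum_mem _ fun k => ?_
    rw [MvPolynomial.aevalOfCommute_psum]
    exact Algebra.sum_pow_mem_adjoin_sum (Egen_mul_EpsGen_sq n) k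
  exact AlgHom.adjoin_le_equalizer (CliffordAlgebra.map f) (AlgHom.id ℝ _)
    (Set.eqOn_singleton.2 hc) hmem
end
end

section
/- Let T = {(z₁,z₂,z₃) ∈ U³ : z₁z₂z₃ = 1} with the permutation action of S₃, and let T^∨ = T/μ₃ be the quotient by the diagonal cube roots of unity μ₃ = {(η,η,η) : η³ = 1}, with the induced S₃-action. Then T has exactly three S₃-fixed points, namely (1,1,1), (ω,ω,ω), (ω²,ω²,ω²) with ω = e^{2πi/3}, while T^∨ has exactly one S₃-fixed point; hence T and T^∨ are not S₃-equivariantly isomorphic. -/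
/-!
A point of `T` fixed by every transposition is diagonal, `(η, η, η)` with `η³ = 1`, so the fixed
points of `T` are exactly `μ₃`. A class `[t] ∈ T/μ₃` fixed by a transposition `τ` satisfies
`τ • t = t ζ` for some `ζ ∈ μ₃`; reading this at the coordinate that `τ` fixes gives `ζ = 1`, so
`t` is again diagonal and `[t] = 1`. An equivariant homeomorphism would biject the fixed points,
of which there are `3` and `1`.
-/

open Real

noncomputable section

/-- The maximal torus `T = {(z₁,z₂,z₃) ∈ U³ : z₁z₂z₃ = 1}` of `SU(3)`. -/
def T333 : Subgroup (Fin 3 → Circle) where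
  carrier := {z | z 0 * z 1 * z 2 = 1}
  one_mem' := by simp
  mul_mem' := by
    intro a b ha hb
    simp only [Set.mem_setOf_eq, Pi.mul_apply] at *
    calc a 0 * b 0 * (a 1 * b 1) * (a 2 * b 2)
        = (a 0 * a 1 * a 2) * (b 0 * b 1 * b 2) := by
          simp [mul_assoc, mul_comm, mul_left_comm]
      _ = 1 := by rw [ha, hb, mul_one]
  inv_mem' := by
    intro a ha
    simp only [Set.mem_setOf_eq, Pi.inv_apply] at *
    calc (a 0)⁻¹ * (a 1)⁻¹ * (a 2)⁻¹ = (a 0 * a 1 * a 2)⁻¹ := by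
          simp [mul_inv_rev, mul_assoc, mul_comm, mul_left_comm]
      _ = 1 := by rw [ha, inv_one]

/-- The permutation action of `S₃` on `T`. -/
def permAct (σ : Equiv.Perm (Fin 3)) (t : T333) : T333 :=
  ⟨fun i => (t : Fin 3 → Circle) (σ⁻¹ i), by
    have h3 : (t : Fin 3 → Circle) (σ⁻¹ 0) * (t : Fin 3 → Circle) (σ⁻¹ 1)
        * (t : Fin 3 → Circle) (σ⁻¹ 2)
        = (t : Fin 3 → Circle) 0 * (t : Fin 3 → Circle) 1 * (t : Fin 3 → Circle) 2 := by
      simpa [Fin.prod_univ_three] using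
        Equiv.prod_comp σ⁻¹ (fun i => (t : Fin 3 → Circle) i)
    show (t : Fin 3 → Circle) (σ⁻¹ 0) * (t : Fin 3 → Circle) (σ⁻¹ 1)
        * (t : Fin 3 → Circle) (σ⁻¹ 2) = 1
    rw [h3]; exact t.2⟩

/-- The permutation action as a group homomorphism `T → T` for each `σ`. -/
def permActHom (σ : Equiv.Perm (Fin 3)) : T333 →* T333 where
  toFun := permAct σ
  map_one' := by ext i; rfl
  map_mul' := by intro a b; ext i; rfl

/-- The diagonal cube roots of unity `μ₃ = {(η,η,η) : η³ = 1} ⊆ T`. -/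
def Z3 : Subgroup T333 where
  carrier := {t | ∃ η : Circle, η ^ 3 = 1 ∧ ∀ i, (t : Fin 3 → Circle) i = η}
  one_mem' := ⟨1, by simp, fun i => rfl⟩
  mul_mem' := by
    rintro a b ⟨η, hη, ha⟩ ⟨ζ, hζ, hb⟩
    exact ⟨η * ζ, by rw [mul_pow, hη, hζ, mul_one],
      fun i => by simp [Subgroup.coe_mul, Pi.mul_apply, ha i, hb i]⟩
  inv_mem' := by
    rintro a ⟨η, hη, ha⟩
    exact ⟨η⁻¹, by rw [inv_pow, hη, inv_one],
      fun i => by simp [Pi.inv_apply, ha i]⟩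

instance : Z3.Normal := by
  constructor
  intro a ha g
  have : g * a * g⁻¹ = a := by rw [mul_comm g a, mul_inv_cancel_right]
  rwa [this]

/-- The induced action of `S₃` on the quotient `T^∨ = T/μ₃`. -/
def permActQ (σ : Equiv.Perm (Fin 3)) : T333 ⧸ Z3 → T333 ⧸ Z3 :=
  QuotientGroup.map Z3 Z3 (permActHom σ) (by
    rintro t ⟨η, hη, ht⟩
    exact ⟨η, hη, fun i => ht (σ⁻¹ i)⟩)

open Equiv

namespace Circle

theorem isPrimitiveRoot_exp (n : ℕ) (hn : n ≠ 0) :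
    IsPrimitiveRoot (Circle.exp (2 * π / n)) n := by
  refine IsPrimitiveRoot.of_map_of_injective (f := coeHom) ?_ coe_injective
  convert Complex.isPrimitiveRoot_exp n hn using 1
  change Complex.exp _ = _
  push_cast
  ring_nf

theorem pow_three_eq_one_iff {ω : Circle} (hω : IsPrimitiveRoot ω 3) {η : Circle} :
    η ^ 3 = 1 ↔ η = 1 ∨ η = ω ∨ η = ω ^ 2 := by
  constructor
  · intro h
    obtain ⟨i, hi, hωη⟩ := (hω.map_of_injective (f := coeHom) coe_injective).eq_pow_of_pow_eq_one
      (ξ := (η : ℂ)) (by rw [← coe_pow, h, coe_one])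
    rw [← map_pow] at hωη
    obtain rfl : ω ^ i = η := coe_injective hωη
    interval_cases i <;> simp
  · rintro (rfl | rfl | rfl)
    · exact one_pow 3
    · exact hω.pow_eq_one
    · rw [← pow_mul, pow_mul', hω.pow_eq_one, one_pow]

theorem natCard_pow_three_eq_one : Nat.card {η : Circle // η ^ 3 = 1} = 3 := by
  have hω := isPrimitiveRoot_exp 3 three_ne_zero
  change Nat.card ({η | η ^ 3 = 1} : Set Circle) = 3
  rw [Nat.card_coe_set_eq, Set.ncard_eq_three]
  refine ⟨1, _, _, (hω.ne_one (by norm_num)).symm,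
    (hω.pow_ne_one_of_pos_of_lt two_ne_zero (by norm_num)).symm, fun h => ?_,
    Set.ext fun η => pow_three_eq_one_iff hω⟩
  have := hω.pow_inj (i := 1) (j := 2) (by norm_num) (by norm_num) (by rwa [pow_one])
  omega

end Circle

theorem Function.apply_eq_apply_of_forall_perm {ι α : Type*} [DecidableEq ι] {f : ι → α}
    (h : ∀ σ : Perm ι, f ∘ σ = f) (i j : ι) : f i = f j := by
  simpa using (congrFun (h (Equiv.swap i j)) i).symm

theorem Function.apply_eq_apply_of_inv_mul_swap_eq {ι G : Type*} [DecidableEq ι] [Group G]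
    {f : ι → G} {i j k : ι} (hki : k ≠ i) (hkj : k ≠ j) {c : G}
    (h : ∀ l, (f (Equiv.swap i j l))⁻¹ * f l = c) : f i = f j := by
  have hc : c = 1 := by rw [← h k, swap_apply_of_ne_of_ne hki hkj, inv_mul_cancel]
  have hi := h i
  rw [swap_apply_left, hc, inv_mul_eq_one] at hi
  exact hi.symm

theorem Equiv.natCard_fixedPoints_eq_of_semiconj {ι X Y : Type*} (e : X ≃ Y)
    {f : ι → X → X} {g : ι → Y → Y} (he : ∀ σ, Function.Semiconj e (f σ) (g σ)) :
    Nat.card {x // ∀ σ, f σ x = x} = Nat.card {y // ∀ σ, g σ y = y} :=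
  Nat.card_congr <| e.subtypeEquiv fun x => forall_congr' fun σ => by
    rw [← he σ x, e.apply_eq_iff_eq]

@[simp]
theorem coe_permAct_apply (σ : Perm (Fin 3)) (t : T333) (i : Fin 3) :
    (permAct σ t : Fin 3 → Circle) i = (t : Fin 3 → Circle) (σ⁻¹ i) :=
  rfl

theorem mem_Z3_iff_forall_apply_eq {t : T333} :
    t ∈ Z3 ↔ ∀ i j, (t : Fin 3 → Circle) i = (t : Fin 3 → Circle) j := by
  refine ⟨fun ⟨η, _, ht⟩ i j => by rw [ht i, ht j], fun ht => ⟨(t : Fin 3 → Circle) 0, ?_,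
    fun i => ht i 0⟩⟩
  have hprod : (t : Fin 3 → Circle) 0 * (t : Fin 3 → Circle) 1 * (t : Fin 3 → Circle) 2 = 1 := t.2
  rwa [ht 1 0, ht 2 0, ← pow_three'] at hprod

theorem forall_permAct_eq_self_iff {t : T333} : (∀ σ, permAct σ t = t) ↔ t ∈ Z3 := by
  rw [mem_Z3_iff_forall_apply_eq]
  refine ⟨fun h => Function.apply_eq_apply_of_forall_perm fun σ => ?_,
    fun h σ => Subtype.ext (funext fun i => h _ _)⟩
  funext i
  simpa using congrArg (fun s : T333 => (s : Fin 3 → Circle) i) (h σ⁻¹)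

theorem forall_permActQ_eq_self_iff {q : T333 ⧸ Z3} : (∀ σ, permActQ σ q = q) ↔ q = 1 := by
  refine ⟨fun h => ?_, fun hq σ => hq ▸ map_one (QuotientGroup.map _ _ (permActHom σ) _)⟩
  induction q using QuotientGroup.induction_on with | H t => ?_
  have hswap : ∀ i j k : Fin 3, k ≠ i → k ≠ j →
      (t : Fin 3 → Circle) i = (t : Fin 3 → Circle) j := by
    intro i j k hki hkj
    obtain ⟨c, -, hc⟩ := QuotientGroup.eq.mp (h (Equiv.swap i j))
    exact Function.apply_eq_apply_of_inv_mul_swap_eq hki hkj (c := c) fun l => by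
      simpa [permActHom] using hc l
  rw [QuotientGroup.eq_one_iff, mem_Z3_iff_forall_apply_eq]
  intro i j
  obtain ⟨k, hki, hkj⟩ : ∃ k, k ≠ i ∧ k ≠ j := by revert i j; decide
  exact hswap i j k hki hkj

def z3EquivCubeRoots : Z3 ≃ {η : Circle // η ^ 3 = 1} where
  toFun t := ⟨((t : T333) : Fin 3 → Circle) 0, by obtain ⟨η, hη, ht⟩ := t.2; rwa [ht]⟩
  invFun η := ⟨⟨fun _ => η, by change η.1 * η.1 * η.1 = 1; rw [← pow_three', η.2]⟩,
    η, η.2, fun _ => rfl⟩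
  left_inv t :=
    Subtype.ext <| Subtype.ext <| funext fun i => (mem_Z3_iff_forall_apply_eq.mp t.2 i 0).symm
  right_inv η := rfl

/-- `T` has exactly three `S₃`-fixed points, namely `(1,1,1)`,
`(ω,ω,ω)`, `(ω²,ω²,ω²)` with `ω = e^{2πi/3}`, while `T^∨ = T/μ₃` has exactly
one `S₃`-fixed point; hence `T` and `T^∨` are not `S₃`-equivariantly
isomorphic. -/
theorem fixed_points_T_and_Tdual :
    ({t : T333 | ∀ σ : Equiv.Perm (Fin 3), permAct σ t = t}
      = {t : T333 | ∃ η : Circle,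
          (η = 1 ∨ η = Circle.exp (2 * π / 3) ∨ η = Circle.exp (2 * π / 3) ^ 2)
          ∧ ∀ i, (t : Fin 3 → Circle) i = η}) ∧
    Nat.card {t : T333 // ∀ σ : Equiv.Perm (Fin 3), permAct σ t = t} = 3 ∧
    Nat.card {q : T333 ⧸ Z3 // ∀ σ : Equiv.Perm (Fin 3), permActQ σ q = q} = 1 ∧
    ¬ ∃ e : T333 ≃ₜ (T333 ⧸ Z3),
        ∀ (σ : Equiv.Perm (Fin 3)) (t : T333),
          e (permAct σ t) = permActQ σ (e t) := by
  have hω : IsPrimitiveRoot (Circle.exp (2 * π / 3)) 3 := by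
    exact_mod_cast Circle.isPrimitiveRoot_exp 3 three_ne_zero
  have hcardT : Nat.card {t : T333 // ∀ σ, permAct σ t = t} = 3 := by
    rw [Nat.card_congr (subtypeEquivRight fun t => forall_permAct_eq_self_iff),
      Nat.card_congr z3EquivCubeRoots, Circle.natCard_pow_three_eq_one]
  have hcardQ : Nat.card {q : T333 ⧸ Z3 // ∀ σ, permActQ σ q = q} = 1 := by
    rw [Nat.card_congr (subtypeEquivRight fun q => forall_permActQ_eq_self_iff)]
    exact Nat.card_unique
  refine ⟨Set.ext fun t => ?_, hcardT, hcardQ, fun ⟨e, he⟩ => ?_⟩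
  · exact forall_permAct_eq_self_iff.trans
      (exists_congr fun η => and_congr_left' (Circle.pow_three_eq_one_iff hω))
  · have := e.toEquiv.natCard_fixedPoints_eq_of_semiconj he
    rw [hcardT, hcardQ] at this
    omega
end
end
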